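/- arXiv:1612.09158 — 2 statements merged into one kernel-verified Lean document; each statement's English description precedes it below -/
import Mathlib

section
/- The stable spline kernel K(t,s) = exp(−β·max(t,s)), β > 0, is a positive definite kernel on ℝ₊ × ℝ₊: for any points t_1,…,t_p ≥ 0 and scalars c_1,…,c_p, ∑_{i,j} c_i c_j exp(−β·max(t_i, t_j)) ≥ 0. -/
/-! Since `exp (-β s)` is decreasing, `exp (-β * max t s) = min (exp (-β t)) (exp (-β s))`, so it
suffices that the kernel `min` is positive definite on `ℝ₊`. This holds because
`min x y = ∫ 1_{(0,x]} 1_{(0,y]}`, which makes every quadratic form of `min` the integral of a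
square. -/

open MeasureTheory Set

section QuadraticForm

variable {α ι : Type*} [MeasurableSpace α] {μ : Measure α} [Fintype ι]

theorem quadForm_integral_mul_nonneg {f : ι → α → ℝ}
    (hf : ∀ i j, Integrable (fun u => f i u * f j u) μ) (c : ι → ℝ) :
    0 ≤ ∑ i, ∑ j, c i * c j * ∫ u, f i u * f j u ∂μ := by
  have hint : ∀ i j, Integrable (fun u => c i * c j * (f i u * f j u)) μ :=
    fun i j => (hf i j).const_mul _
  calc (0 : ℝ) ≤ ∫ u, (∑ i, c i * f i u) ^ 2 ∂μ := integral_nonneg fun u => sq_nonneg _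
    _ = ∫ u, ∑ i, ∑ j, c i * c j * (f i u * f j u) ∂μ := by
        congr 1 with u
        rw [sq, Finset.sum_mul_sum]
        exact Finset.sum_congr rfl fun i _ => Finset.sum_congr rfl fun j _ => by ring
    _ = ∑ i, ∑ j, c i * c j * ∫ u, f i u * f j u ∂μ := by
        rw [integral_finsetSum _ fun i _ => integrable_finsetSum _ fun j _ => hint i j]
        refine Finset.sum_congr rfl fun i _ => ?_
        rw [integral_finsetSum _ fun j _ => hint i j]
        exact Finset.sum_congr rfl fun j _ => integral_const_mul _ _

end QuadraticForm

theorem indicator_Ioc_one_mul (a b : ℝ) :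
    (fun u => (Ioc 0 a).indicator (1 : ℝ → ℝ) u * (Ioc 0 b).indicator 1 u) =
      (Ioc 0 (min a b)).indicator 1 := by
  rw [← Pi.mul_def, ← inter_indicator_one, Ioc_inter_Ioc, max_self]

theorem integral_indicator_Ioc_one_mul {a b : ℝ} (ha : 0 ≤ a) (hb : 0 ≤ b) :
    ∫ u, (Ioc 0 a).indicator (1 : ℝ → ℝ) u * (Ioc 0 b).indicator 1 u = min a b := by
  rw [indicator_Ioc_one_mul, integral_indicator_one measurableSet_Ioc, Real.volume_real_Ioc,
    sub_zero, max_eq_left (le_min ha hb)]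

theorem integrable_indicator_Ioc_one_mul (a b : ℝ) :
    Integrable (fun u => (Ioc 0 a).indicator (1 : ℝ → ℝ) u * (Ioc 0 b).indicator 1 u) := by
  rw [indicator_Ioc_one_mul, integrable_indicator_iff measurableSet_Ioc]
  exact integrableOn_const (by simp [Real.volume_Ioc])

theorem quadForm_min_nonneg {ι : Type*} [Fintype ι] {x : ι → ℝ} (hx : ∀ i, 0 ≤ x i)
    (c : ι → ℝ) : 0 ≤ ∑ i, ∑ j, c i * c j * min (x i) (x j) := by
  have h := quadForm_integral_mul_nonneg
    (fun i j => integrable_indicator_Ioc_one_mul (x i) (x j)) c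
  simpa only [integral_indicator_Ioc_one_mul (hx _) (hx _)] using h

/-- The stable spline kernel `K(t,s) = exp(−β·max(t,s))`, `β > 0`, is a
positive definite kernel on `ℝ₊ × ℝ₊`: all its Gram matrices are positive
semidefinite. -/
theorem stable_spline_posdef (β : ℝ) (hβ : 0 < β) :
    ∀ (p : ℕ) (t : Fin p → ℝ), (∀ i, 0 ≤ t i) → ∀ c : Fin p → ℝ,
      0 ≤ ∑ i : Fin p, ∑ j : Fin p, c i * c j * Real.exp (-β * max (t i) (t j)) := by
  intro p t _ c
  have hanti : Antitone fun s => Real.exp (-β * s) :=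
    Real.exp_monotone.comp_antitone (antitone_mul_left (by linarith))
  simp only [hanti.map_max]
  exact quadForm_min_nonneg (fun i => (Real.exp_pos _).le) c
end

section
/- Let H be an RKHS over X with kernel 𝒦 and let x_1,…,x_N ∈ X, Y ∈ ℝ^N, γ > 0. The minimizer over H of f ↦ (1/N)∑_{i=1}^N (y_i − f(x_i))² + γ‖f‖²_H is unique and given by ĝ = ∑_{i=1}^N ĉ_i 𝒦_{x_i}, where ĉ = (𝐊 + γN I_N)^{-1} Y and 𝐊 is the N × N Gram matrix with entries 𝒦(x_i, x_j). -/
/-!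
Since `ev f x = ⟪𝒦ₓ, f⟫`, the Gram matrix of the `𝒦_{xᵢ}` is `𝐊`, and the normal equations
`(𝐊 + γN I) ĉ = Y` say that the residuals `yᵢ - ĝ(xᵢ)` equal `γN ĉᵢ`. This makes the cross term
in the expansion of `J (ĝ + h)` vanish, so `J (ĝ + h) = J ĝ + (1/N) ∑ᵢ h(xᵢ)² + γ‖h‖²`.
-/

open Matrix
open scoped InnerProductSpace

section RegularizedLeastSquares

variable {E ι : Type*} [NormedAddCommGroup E] [InnerProductSpace ℝ E] [Fintype ι]

theorem Matrix.posDef_gram_add_smul_one [DecidableEq ι] (v : ι → E) {μ : ℝ} (hμ : 0 < μ) :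
    (gram ℝ v + μ • (1 : Matrix ι ι ℝ)).PosDef :=
  PosDef.posSemidef_add (posSemidef_gram ℝ v) (PosDef.one.smul hμ)

theorem inner_sum_smul_eq_gram_mulVec (v : ι → E) (c : ι → ℝ) (i : ι) :
    ⟪v i, ∑ j, c j • v j⟫_ℝ = (gram ℝ v *ᵥ c) i := by
  simp only [inner_sum, real_inner_smul_right, mulVec, dotProduct, gram_apply, mul_comm]

theorem sub_inner_eq_of_gram_add_smul_one_mulVec_eq [DecidableEq ι] (v : ι → E) {μ : ℝ}
    {c Y : ι → ℝ} (hc : (gram ℝ v + μ • (1 : Matrix ι ι ℝ)) *ᵥ c = Y) {g : E}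
    (hg : g = ∑ j, c j • v j) (i : ι) :
    Y i - ⟪v i, g⟫_ℝ = μ * c i := by
  rw [← hc, hg, inner_sum_smul_eq_gram_mulVec, add_mulVec, smul_mulVec, one_mulVec]
  simp

theorem regularized_sq_loss_eq_add (v : ι → E) {a γ : ℝ} {Y c : ι → ℝ} {g : E}
    (hg : g = ∑ j, c j • v j) (hres : ∀ i, a * (Y i - ⟪v i, g⟫_ℝ) = γ * c i) (f : E) :
    a * ∑ i, (Y i - ⟪v i, f⟫_ℝ) ^ 2 + γ * ‖f‖ ^ 2 =
      a * ∑ i, (Y i - ⟪v i, g⟫_ℝ) ^ 2 + γ * ‖g‖ ^ 2 +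
        (a * ∑ i, ⟪v i, f - g⟫_ℝ ^ 2 + γ * ‖f - g‖ ^ 2) := by
  obtain ⟨h, rfl⟩ : ∃ h, f = g + h := ⟨f - g, (add_sub_cancel g f).symm⟩
  have hcross : a * ∑ i, (Y i - ⟪v i, g⟫_ℝ) * ⟪v i, h⟫_ℝ = γ * ⟪g, h⟫_ℝ := by
    conv_rhs => rw [hg]
    simp only [sum_inner, real_inner_smul_left, Finset.mul_sum, ← mul_assoc, hres]
  have hsq : ∀ i, (Y i - ⟪v i, g + h⟫_ℝ) ^ 2 =
      (Y i - ⟪v i, g⟫_ℝ) ^ 2 - 2 * ((Y i - ⟪v i, g⟫_ℝ) * ⟪v i, h⟫_ℝ) + ⟪v i, h⟫_ℝ ^ 2 := by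
    intro i; rw [inner_add_right]; ring
  rw [add_sub_cancel_left, norm_add_sq_real, Finset.sum_congr rfl fun i _ => hsq i,
    Finset.sum_add_distrib, Finset.sum_sub_distrib, ← Finset.mul_sum]
  linear_combination (-2) * hcross

end RegularizedLeastSquares

/-- representer theorem: In an RKHS `H` with kernel `𝒦`, given data
`x₁,…,x_N`, `Y ∈ ℝ^N` and `γ > 0`, the regularized least-squares objective
`f ↦ (1/N)∑ᵢ (yᵢ − f(xᵢ))² + γ‖f‖²` has the unique minimizer
`ĝ = ∑ᵢ ĉᵢ 𝒦_{xᵢ}` with `ĉ = (Kmat + γN I)⁻¹ Y`, `Kmatᵢⱼ = 𝒦(xᵢ,xⱼ)`. -/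
theorem representer_theorem
    {H : Type*} [NormedAddCommGroup H] [InnerProductSpace ℝ H]
    {X : Type*}
    (ev : H → X → ℝ) (Kx : X → H) (𝒦 : X → X → ℝ)
    (hK : ∀ x y : X, 𝒦 x y = ev (Kx x) y)
    (hrep : ∀ (g : H) (x : X), (inner ℝ (Kx x) g : ℝ) = ev g x)
    (N : ℕ) (x : Fin N → X) (Y : Fin N → ℝ) (γ : ℝ) (hγ : 0 < γ) :
    let Kmat : Matrix (Fin N) (Fin N) ℝ := fun i j => 𝒦 (x i) (x j)
    let c : Fin N → ℝ := (Kmat + (γ * N) • (1 : Matrix (Fin N) (Fin N) ℝ))⁻¹.mulVec Y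
    let g : H := ∑ i, c i • Kx (x i)
    let J : H → ℝ := fun f =>
      (∑ i, (Y i - ev f (x i)) ^ 2) / N + γ * ‖f‖ ^ 2
    (∀ f : H, J g ≤ J f) ∧ (∀ f : H, J f = J g → f = g) := by
  intro Kmat c g J
  have hKmat : Kmat = gram ℝ (fun i => Kx (x i)) := by
    ext i j
    simp only [Kmat, hK, ← hrep, gram_apply, real_inner_comm]
  -- `i : Fin N` forces `N > 0`, so the regularized Gram matrix is invertible
  have hres : ∀ i, (N : ℝ)⁻¹ * (Y i - ⟪Kx (x i), g⟫_ℝ) = γ * c i := by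
    intro i
    have hN : (0 : ℝ) < N := by exact_mod_cast i.pos
    have hpd := hKmat ▸ posDef_gram_add_smul_one (fun i => Kx (x i)) (mul_pos hγ hN)
    have hc : (Kmat + (γ * N) • (1 : Matrix (Fin N) (Fin N) ℝ)) *ᵥ c = Y := by
      rw [mulVec_mulVec, mul_nonsing_inv _ hpd.det_pos.ne'.isUnit, one_mulVec]
    rw [sub_inner_eq_of_gram_add_smul_one_mulVec_eq _ (hKmat ▸ hc) (g := g) rfl]
    field_simp
  have hJ : ∀ f, J f = J g + ((N : ℝ)⁻¹ * ∑ i, ⟪Kx (x i), f - g⟫_ℝ ^ 2 + γ * ‖f - g‖ ^ 2) := by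
    intro f
    simp only [J, ← hrep, div_eq_inv_mul]
    exact regularized_sq_loss_eq_add _ rfl hres f
  have hfit : ∀ f, 0 ≤ (N : ℝ)⁻¹ * ∑ i, ⟪Kx (x i), f - g⟫_ℝ ^ 2 := fun f => by positivity
  refine ⟨fun f => (hJ f).symm ▸ le_add_of_nonneg_right (add_nonneg (hfit f) (by positivity)),
    fun f hf => ?_⟩
  have hdist : γ * ‖f - g‖ ^ 2 = 0 := by linarith [hJ f, hfit f, mul_nonneg hγ.le (sq_nonneg ‖f - g‖)]
  simpa [hγ.ne', sub_eq_zero] using hdist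
end
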